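/- Let ρ₂(r) = ((11/32)r² + (11/384)r⁴)/(1 + (1/3)r² + (11/384)r⁴) and r₀ = 2√(6(4+3√2)). Then ρ₂ attains a strict global maximum over (0,∞) at r₀, i.e. ρ₂(r) < ρ₂(r₀) for all r > 0 with r ≠ r₀, and moreover ρ₂(r₀) > 1. -/

import Mathlib

/-- The order-2 diagonal Padé approximant of the vortex density,
with coefficients `a₁ = 11/32`, `b₁ = 1/3`, `a₂ = 11/384`. -/
noncomputable def rho2 (r : ℝ) : ℝ :=
  ((11 / 32) * r ^ 2 + (11 / 384) * r ^ 4) / (1 + (1 / 3) * r ^ 2 + (11 / 384) * r ^ 4)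

/-- `r₀ = 2√(6(4+3√2)) ≈ 14.065`, the unique positive root of `r⁴ − 192r² − 1152`. -/
noncomputable def r0 : ℝ := 2 * Real.sqrt (6 * (4 + 3 * Real.sqrt 2))

/-!
In the variable `s = r²`, `ρ₂ = N(s)/D(s)` with `N(s) = a₁s + a₂s²` and `D(s) = 1 + b₁s + a₂s²`.
For any `t`, `N(s)D(t) − N(t)D(s)` vanishes at `s = t`; when `t² − 192t − 1152 = 0` (the critical
point equation) it vanishes there to second order and equals `a₂(1 − t/96)(s − t)²`, which is
negative for `s ≠ t` as soon as `t > 96`. Since `D > 0`, this makes `s = r₀²` the strict global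
maximum of `N/D`. Because `a₁ − b₁ = 1/96`, also `N(t) − D(t) = t/96 − 1`, so the maximal value
exceeds `1` exactly because `r₀² > 96`.
-/

namespace Rho2

noncomputable def num (s : ℝ) : ℝ := 11 / 32 * s + 11 / 384 * s ^ 2

noncomputable def den (s : ℝ) : ℝ := 1 + 1 / 3 * s + 11 / 384 * s ^ 2

theorem rho2_eq_num_div_den (r : ℝ) : rho2 r = num (r ^ 2) / den (r ^ 2) := by
  unfold rho2 num den
  ring_nf

theorem den_pos (s : ℝ) : 0 < den s := by
  unfold den
  nlinarith [sq_nonneg (s + 64 / 11)]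

theorem num_mul_den_sub_num_mul_den {t : ℝ} (ht : t ^ 2 - 192 * t - 1152 = 0) (s : ℝ) :
    num s * den t - num t * den s = 11 / 384 * (1 - t / 96) * (s - t) ^ 2 := by
  unfold num den
  linear_combination (-11 / 36864) * (s - t) * ht

theorem num_div_den_lt {s t : ℝ} (ht : t ^ 2 - 192 * t - 1152 = 0) (ht96 : 96 < t)
    (hst : s ≠ t) : num s / den s < num t / den t := by
  rw [div_lt_div_iff₀ (den_pos s) (den_pos t), ← sub_neg,
    num_mul_den_sub_num_mul_den ht]
  exact mul_neg_of_neg_of_pos (by linarith) (pow_two_pos_of_ne_zero (sub_ne_zero.mpr hst))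

theorem one_lt_num_div_den {t : ℝ} (ht96 : 96 < t) : 1 < num t / den t := by
  rw [one_lt_div (den_pos t)]
  unfold num den
  linarith

end Rho2

theorem r0_sq : r0 ^ 2 = 96 + 72 * Real.sqrt 2 := by
  have h2 : (0 : ℝ) ≤ 6 * (4 + 3 * Real.sqrt 2) := by positivity
  rw [r0, mul_pow, Real.sq_sqrt h2]
  ring

theorem r0_pos : 0 < r0 := by
  unfold r0
  positivity

theorem ninetysix_lt_r0_sq : 96 < r0 ^ 2 := by
  rw [r0_sq]
  have : 0 < Real.sqrt 2 := by positivity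
  linarith

theorem r0_sq_sq_sub_eq_zero : (r0 ^ 2) ^ 2 - 192 * r0 ^ 2 - 1152 = 0 := by
  rw [r0_sq]
  linear_combination (5184 : ℝ) * Real.sq_sqrt (show (0 : ℝ) ≤ 2 by norm_num)

open Rho2 in
/-- `ρ₂` attains a strict global maximum over `(0,∞)` at `r₀`, and `ρ₂(r₀) > 1`. -/
theorem stmt_7 :
    (∀ r : ℝ, 0 < r → r ≠ r0 → rho2 r < rho2 r0) ∧ 1 < rho2 r0 := by
  refine ⟨fun r hr hne => ?_, ?_⟩
  · rw [rho2_eq_num_div_den, rho2_eq_num_div_den]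
    refine num_div_den_lt r0_sq_sq_sub_eq_zero ninetysix_lt_r0_sq fun h => hne ?_
    exact (pow_left_inj₀ hr.le r0_pos.le two_ne_zero).mp h
  · rw [rho2_eq_num_div_den]
    exact one_lt_num_div_den ninetysix_lt_r0_sq
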